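/- Let M, N be positive natural numbers and let d be a dataset of N instances with M binary protected attributes and a binary label. Suppose every vertex (level-0 hypercube) contains at least one instance, and suppose at least one instance has label true. Then the worst-case disparate impact DI(K) = SR_min(K)/SR_max(K) is monotonically increasing in the level K: for every K with 1 ≤ K ≤ M, DI(K-1) ≤ DI(K). -/

import Mathlib

/-- An attribute vector `v` belongs to the hypercube `x` if it matches all specified coordinates. -/
def Belongs {M : ℕ} (x : Fin M → Option Bool) (v : Fin M → Bool) : Prop :=
  ∀ i : Fin M, ∀ b : Bool, x i = some b → v i = b

instance {M : ℕ} (x : Fin M → Option Bool) (v : Fin M → Bool) : Decidable (Belongs x v) := by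
  unfold Belongs; infer_instance

/-- The level of a hypercube: the number of its stars (unspecified coordinates). -/
def level {M : ℕ} (x : Fin M → Option Bool) : ℕ :=
  (Finset.univ.filter fun i => x i = none).card

/-- `cnt d x` = N(x): the number of instances of the dataset `d` belonging to `x`. -/
def cnt {M N : ℕ} (d : Fin N → (Fin M → Bool) × Bool) (x : Fin M → Option Bool) : ℕ :=
  (Finset.univ.filter fun n => Belongs x (d n).1).card

/-- `cnt1 d x` = N¹(x): the number of instances belonging to `x` with label `true`. -/
def cnt1 {M N : ℕ} (d : Fin N → (Fin M → Bool) × Bool) (x : Fin M → Option Bool) : ℕ :=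
  (Finset.univ.filter fun n => Belongs x (d n).1 ∧ (d n).2 = true).card

/-- The success rate SR(x) = N¹(x)/N(x). -/
def SR {M N : ℕ} (d : Fin N → (Fin M → Bool) × Bool) (x : Fin M → Option Bool) : ℚ :=
  (cnt1 d x : ℚ) / (cnt d x : ℚ)

/-- The finset of all hypercubes of level `K`. -/
def levelSet (M K : ℕ) : Finset (Fin M → Option Bool) :=
  Finset.univ.filter fun x => level x = K

/-- SR_min(K): minimum success rate over all hypercubes of level `K`
(the level set is nonempty whenever `K ≤ M`, so the junk value `0` is never used there). -/
def SRmin {M N : ℕ} (d : Fin N → (Fin M → Bool) × Bool) (K : ℕ) : ℚ :=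
  WithTop.untopD 0 (((levelSet M K).image (SR d)).min)

/-- SR_max(K): maximum success rate over all hypercubes of level `K`. -/
def SRmax {M N : ℕ} (d : Fin N → (Fin M → Bool) × Bool) (K : ℕ) : ℚ :=
  WithBot.unbotD 0 (((levelSet M K).image (SR d)).max)

/-- The worst-case disparate impact at level K. -/
def DI {M N : ℕ} (d : Fin N → (Fin M → Bool) × Bool) (K : ℕ) : ℚ :=
  SRmin d K / SRmax d K

/-!
Removing one star from a hypercube splits it into two hypercubes of the next lower level, and
since every hypercube is nonempty, its success rate is the mediant of theirs and so lies between
them. Hence the minimal success rate can only increase and the maximal one only decrease as the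
level grows, and their quotient increases.
-/

open Finset

section Mediant

variable {α : Type*} [Field α] [LinearOrder α] [IsStrictOrderedRing α] {a b c d r : α}

lemma le_add_div_add (hb : 0 < b) (hd : 0 < d) (h₁ : r ≤ a / b) (h₂ : r ≤ c / d) :
    r ≤ (a + c) / (b + d) := by
  rw [le_div_iff₀ hb] at h₁
  rw [le_div_iff₀ hd] at h₂
  rw [le_div_iff₀ (add_pos hb hd)]
  linarith

lemma add_div_add_le (hb : 0 < b) (hd : 0 < d) (h₁ : a / b ≤ r) (h₂ : c / d ≤ r) :
    (a + c) / (b + d) ≤ r := by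
  rw [div_le_iff₀ hb] at h₁
  rw [div_le_iff₀ hd] at h₂
  rw [div_le_iff₀ (add_pos hb hd)]
  linarith

/-- Unlike `div_le_div₀`, this allows `b' = 0` (where `a' / b'` is the junk value `0`), since then
`a' ≤ b'` forces `a = 0`. -/
lemma div_le_div_of_le_of_le {a a' b b' : α} (ha : 0 ≤ a) (haa' : a ≤ a') (ha'b' : a' ≤ b')
    (hb'b : b' ≤ b) : a / b ≤ a' / b' := by
  rcases (ha.trans (haa'.trans ha'b')).eq_or_lt with hb' | hb'
  · obtain rfl : a = 0 := by linarith
    simp [← hb']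
  · exact div_le_div₀ (ha.trans haa') haa' hb' hb'b

end Mediant

section Hypercube

variable {M : ℕ} {x : Fin M → Option Bool} {i : Fin M}

lemma belongs_update_iff (hi : x i = none) (b : Bool) (v : Fin M → Bool) :
    Belongs (Function.update x i (some b)) v ↔ Belongs x v ∧ v i = b := by
  constructor
  · intro h
    refine ⟨fun j c hj => h j c ?_, h i b (by simp)⟩
    rwa [Function.update_of_ne (by rintro rfl; simp [hi] at hj)]
  · rintro ⟨h, rfl⟩ j c hj
    by_cases hji : j = i
    · subst hji
      simpa using hj
    · exact h j c (by rwa [Function.update_of_ne hji] at hj)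

lemma level_update (hi : x i = none) (b : Bool) :
    level (Function.update x i (some b)) = level x - 1 := by
  have h : univ.filter (fun j => Function.update x i (some b) j = none)
      = (univ.filter fun j => x j = none).erase i := by
    ext j
    by_cases hji : j = i <;> simp [Function.update_apply, hji, hi]
  rw [level, h, card_erase_of_mem (by simp [hi]), level]

lemma exists_star_of_level_eq_succ {K : ℕ} (hx : level x = K + 1) : ∃ i, x i = none := by
  obtain ⟨i, hi⟩ := card_pos.mp (hx ▸ K.succ_pos : 0 < level x)
  exact ⟨i, (mem_filter.mp hi).2⟩

lemma exists_level_eq_belongs {K : ℕ} (hK : K ≤ M) (v : Fin M → Bool) :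
    ∃ x : Fin M → Option Bool, level x = K ∧ Belongs x v := by
  obtain ⟨t, -, ht⟩ := exists_subset_card_eq (s := (univ : Finset (Fin M))) (by simpa using hK)
  refine ⟨fun i => if i ∈ t then none else some (v i), ?_, fun i b hib => ?_⟩
  · rw [level, ← ht]
    congr 1
    ext i
    by_cases h : i ∈ t <;> simp [h]
  · by_cases h : i ∈ t <;> simp_all

@[simp]
lemma mem_levelSet {K : ℕ} : x ∈ levelSet M K ↔ level x = K := by
  simp [levelSet]

lemma levelSet_nonempty {K : ℕ} (hK : K ≤ M) : (levelSet M K).Nonempty := by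
  obtain ⟨x, hx, -⟩ := exists_level_eq_belongs hK (fun _ => false)
  exact ⟨x, mem_levelSet.mpr hx⟩

end Hypercube

section Dataset

variable {M N : ℕ} (d : Fin N → (Fin M → Bool) × Bool) {x : Fin M → Option Bool} {i : Fin M}

lemma card_filter_belongs_and_eq_add (p : Fin N → Prop) [DecidablePred p] (hi : x i = none) :
    #{n | Belongs x (d n).1 ∧ p n} =
      #{n | Belongs (Function.update x i (some false)) (d n).1 ∧ p n} +
        #{n | Belongs (Function.update x i (some true)) (d n).1 ∧ p n} := by
  rw [← card_union_of_disjoint]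
  · congr 1
    ext n
    simp only [mem_union, mem_filter, mem_univ, true_and, belongs_update_iff hi]
    cases (d n).1 i <;> simp
  · refine disjoint_left.mpr fun n h₁ h₂ => ?_
    simp only [mem_filter, belongs_update_iff hi] at h₁ h₂
    exact Bool.false_ne_true (h₁.2.1.2.symm.trans h₂.2.1.2)

lemma cnt_eq_add (hi : x i = none) :
    cnt d x = cnt d (Function.update x i (some false)) + cnt d (Function.update x i (some true)) := by
  simpa [cnt] using card_filter_belongs_and_eq_add d (fun _ => True) hi

lemma cnt1_eq_add (hi : x i = none) :
    cnt1 d x =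
      cnt1 d (Function.update x i (some false)) + cnt1 d (Function.update x i (some true)) :=
  card_filter_belongs_and_eq_add d (fun n => (d n).2 = true) hi

lemma cnt_pos_of_forall_vertex (hvert : ∀ v : Fin M → Bool, 0 < cnt d (fun i => some (v i)))
    (x : Fin M → Option Bool) : 0 < cnt d x := by
  refine (hvert fun i => (x i).getD false).trans_le (card_le_card fun n hn => ?_)
  simp only [mem_filter, mem_univ, true_and] at hn ⊢
  intro i b hib
  simpa [hib] using hn i _ rfl

lemma SR_nonneg (x : Fin M → Option Bool) : 0 ≤ SR d x := by
  unfold SR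
  positivity

variable {d}

section Split

variable (hcnt : ∀ x, 0 < cnt d x) (hi : x i = none)
include hcnt hi

lemma le_SR_of_le_SR_update {r : ℚ} (h₀ : r ≤ SR d (Function.update x i (some false)))
    (h₁ : r ≤ SR d (Function.update x i (some true))) : r ≤ SR d x := by
  rw [SR, cnt_eq_add d hi, cnt1_eq_add d hi]
  push_cast
  exact le_add_div_add (by exact_mod_cast hcnt _) (by exact_mod_cast hcnt _) h₀ h₁

lemma SR_le_of_SR_update_le {r : ℚ} (h₀ : SR d (Function.update x i (some false)) ≤ r)
    (h₁ : SR d (Function.update x i (some true)) ≤ r) : SR d x ≤ r := by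
  rw [SR, cnt_eq_add d hi, cnt1_eq_add d hi]
  push_cast
  exact add_div_add_le (by exact_mod_cast hcnt _) (by exact_mod_cast hcnt _) h₀ h₁

end Split

lemma isLeast_SRmin {K : ℕ} (hK : K ≤ M) :
    IsLeast ((levelSet M K).image (SR d) : Set ℚ) (SRmin d K) := by
  have hne := (levelSet_nonempty hK).image (SR d)
  rw [SRmin, ← coe_min' hne]
  exact isLeast_min' _ hne

lemma isGreatest_SRmax {K : ℕ} (hK : K ≤ M) :
    IsGreatest ((levelSet M K).image (SR d) : Set ℚ) (SRmax d K) := by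
  have hne := (levelSet_nonempty hK).image (SR d)
  rw [SRmax, ← coe_max' hne]
  exact isGreatest_max' _ hne

variable {K : ℕ}

lemma SRmin_nonneg (hK : K ≤ M) : 0 ≤ SRmin d K := by
  obtain ⟨x, -, hx⟩ := mem_image.mp (isLeast_SRmin (d := d) hK).1
  exact hx ▸ SR_nonneg d x

lemma SRmin_le_SRmax (hK : K ≤ M) : SRmin d K ≤ SRmax d K :=
  (isLeast_SRmin hK).2 (isGreatest_SRmax hK).1

lemma SRmin_le_SRmin_succ (hcnt : ∀ x, 0 < cnt d x) (hK : K + 1 ≤ M) :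
    SRmin d K ≤ SRmin d (K + 1) := by
  obtain ⟨x, hx, hxK⟩ := mem_image.mp (isLeast_SRmin (d := d) hK).1
  rw [← hxK]
  obtain ⟨i, hi⟩ := exists_star_of_level_eq_succ (mem_levelSet.mp hx)
  have hlevel (b : Bool) : Function.update x i (some b) ∈ levelSet M K := by
    simp [level_update hi, mem_levelSet.mp hx]
  exact le_SR_of_le_SR_update hcnt hi
    ((isLeast_SRmin (by omega)).2 (mem_image_of_mem _ (hlevel false)))
    ((isLeast_SRmin (by omega)).2 (mem_image_of_mem _ (hlevel true)))

lemma SRmax_succ_le_SRmax (hcnt : ∀ x, 0 < cnt d x) (hK : K + 1 ≤ M) :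
    SRmax d (K + 1) ≤ SRmax d K := by
  obtain ⟨x, hx, hxK⟩ := mem_image.mp (isGreatest_SRmax (d := d) hK).1
  rw [← hxK]
  obtain ⟨i, hi⟩ := exists_star_of_level_eq_succ (mem_levelSet.mp hx)
  have hlevel (b : Bool) : Function.update x i (some b) ∈ levelSet M K := by
    simp [level_update hi, mem_levelSet.mp hx]
  exact SR_le_of_SR_update_le hcnt hi
    ((isGreatest_SRmax (by omega)).2 (mem_image_of_mem _ (hlevel false)))
    ((isGreatest_SRmax (by omega)).2 (mem_image_of_mem _ (hlevel true)))

end Dataset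

theorem DI_mono_general (M N : ℕ)
    (d : Fin N → (Fin M → Bool) × Bool)
    (hvert : ∀ v : Fin M → Bool, 0 < cnt d (fun i => some (v i)))
    (K : ℕ) (hK1 : 1 ≤ K) (hKM : K ≤ M) :
    DI d (K - 1) ≤ DI d K := by
  obtain ⟨k, rfl⟩ := Nat.exists_eq_add_of_le' hK1
  have hcnt := cnt_pos_of_forall_vertex d hvert
  rw [Nat.add_sub_cancel]
  exact div_le_div_of_le_of_le (SRmin_nonneg (by omega)) (SRmin_le_SRmin_succ hcnt hKM)
    (SRmin_le_SRmax hKM) (SRmax_succ_le_SRmax hcnt hKM)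

/-- If every vertex contains at least one instance and at least one instance
has label true, the worst-case disparate impact is monotonically increasing in the level. -/
theorem DI_mono (M N : ℕ) (hM : 0 < M) (hN : 0 < N)
    (d : Fin N → (Fin M → Bool) × Bool)
    (hvert : ∀ v : Fin M → Bool, 0 < cnt d (fun i => some (v i)))
    (hpos : ∃ n : Fin N, (d n).2 = true)
    (K : ℕ) (hK1 : 1 ≤ K) (hKM : K ≤ M) :
    DI d (K - 1) ≤ DI d K :=
  DI_mono_general M N d hvert K hK1 hKM
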